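/- Let (g, [·,·], α) be a multiplicative hom-Lie algebra. The graded direct sum Der(g) = ⊕_{k≥0} Der_{α^k}(g) of spaces of α^k-derivations, equipped with the commutator bracket [D, D′] = D∘D′ − D′∘D, is a Lie algebra. -/

import Mathlib

/-- A hom-Lie algebra: a real vector space with a skew-symmetric bilinear bracket
and a linear map `α` satisfying the hom-Jacobi identity. -/
structure HomLieAlgebra (g : Type*) [AddCommGroup g] [Module ℝ g] where
  bracket : g →ₗ[ℝ] g →ₗ[ℝ] g
  α : g →ₗ[ℝ] g
  skew : ∀ u v, bracket u v = - bracket v u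
  jacobi : ∀ u v w,
    bracket (α u) (bracket v w) + bracket (α v) (bracket w u)
      + bracket (α w) (bracket u v) = 0

/-- `D` is an `α^k`-derivation of a multiplicative hom-Lie algebra. -/
def IsAlphaDer {g : Type*} [AddCommGroup g] [Module ℝ g]
    (L : HomLieAlgebra g) (k : ℕ) (D : Module.End ℝ g) : Prop :=
  (∀ u, D (L.α u) = L.α (D u)) ∧
  (∀ u v, D (L.bracket u v)
    = L.bracket (D u) ((L.α ^ k) v) + L.bracket ((L.α ^ k) u) (D v))

attribute [local instance 100] LieRing.ofAssociativeRing

/-! An `α^k`-derivation composed with an `α^l`-derivation obeys a Leibniz rule with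
twist `α^(k+l)` up to a cross term that is symmetric in the two factors, so the commutator of an
`α^k`- and an `α^l`-derivation is an `α^(k+l)`-derivation. A spanning set closed under the bracket
spans a Lie subalgebra. -/

theorem LieSubalgebra.lieSpan_toSubmodule_eq_span_of_lie_mem {R L : Type*} [CommRing R]
    [LieRing L] [LieAlgebra R L] {s : Set L} (hs : ∀ x ∈ s, ∀ y ∈ s, ⁅x, y⁆ ∈ s) :
    (lieSpan R L s).toSubmodule = Submodule.span R s := by
  have lie_mem : ∀ {x y}, x ∈ Submodule.span R s → y ∈ Submodule.span R s →
      ⁅x, y⁆ ∈ Submodule.span R s := by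
    intro x y hx hy
    induction hx, hy using Submodule.span_induction₂ with
    | mem_mem x y hx hy => exact Submodule.subset_span (hs x hx y hy)
    | zero_left => simp
    | zero_right => simp
    | add_left x y z _ _ _ hx hy => simpa using add_mem hx hy
    | add_right x y z _ _ _ hx hy => simpa using add_mem hx hy
    | smul_left r x y _ _ h => simpa using Submodule.smul_mem _ r h
    | smul_right r x y _ _ h => simpa using Submodule.smul_mem _ r h
  refine le_antisymm ?_ submodule_span_le_lieSpan
  change _ ≤ ({ Submodule.span R s with lie_mem' := lie_mem } : LieSubalgebra R L)
  exact lieSpan_le.mpr Submodule.subset_span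

namespace IsAlphaDer

variable {g : Type*} [AddCommGroup g] [Module ℝ g] {L : HomLieAlgebra g} {k l : ℕ}
  {D D' : Module.End ℝ g}

theorem commute_pow (hD : IsAlphaDer L k D) (n : ℕ) : Commute D (L.α ^ n) :=
  Commute.pow_right (LinearMap.ext hD.1) n

theorem mul_apply_bracket (hD : IsAlphaDer L k D) (hD' : IsAlphaDer L l D') (u v : g) :
    (D * D') (L.bracket u v)
      = L.bracket ((D * D') u) ((L.α ^ (k + l)) v) + L.bracket ((L.α ^ (k + l)) u) ((D * D') v)
        + (L.bracket ((L.α ^ k) (D' u)) ((L.α ^ l) (D v))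
          + L.bracket ((L.α ^ l) (D u)) ((L.α ^ k) (D' v))) := by
  have hDl : ∀ w, D ((L.α ^ l) w) = (L.α ^ l) (D w) :=
    LinearMap.congr_fun (hD.commute_pow l)
  have hpow : ∀ w, (L.α ^ (k + l)) w = (L.α ^ k) ((L.α ^ l) w) := fun w => by
    rw [pow_add, Module.End.mul_apply]
  simp only [Module.End.mul_apply, hD'.2, map_add, hD.2, hDl, hpow]
  abel

theorem lie (hD : IsAlphaDer L k D) (hD' : IsAlphaDer L l D') :
    IsAlphaDer L (k + l) ⁅D, D'⁆ := by
  rw [Ring.lie_def]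
  refine ⟨fun u => ?_, fun u v => ?_⟩
  · simp only [LinearMap.sub_apply, Module.End.mul_apply, hD.1, hD'.1, map_sub]
  · rw [LinearMap.sub_apply, hD.mul_apply_bracket hD', hD'.mul_apply_bracket hD, add_comm l k]
    simp only [LinearMap.sub_apply, map_sub]
    abel

end IsAlphaDer

theorem der_is_lie_algebra_general {g : Type*} [AddCommGroup g] [Module ℝ g]
    (L : HomLieAlgebra g) :
    ∃ S : LieSubalgebra ℝ (Module.End ℝ g),
      S.toSubmodule
        = Submodule.span ℝ {D : Module.End ℝ g | ∃ k : ℕ, IsAlphaDer L k D} :=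
  ⟨_, LieSubalgebra.lieSpan_toSubmodule_eq_span_of_lie_mem
    fun _ ⟨k, hD⟩ _ ⟨l, hD'⟩ => ⟨k + l, hD.lie hD'⟩⟩

/-- The direct sum `Der(g) = ⊕_{k ≥ 0} Der_{α^k}(g)` (the subspace of `End(g)`
generated by all `α^k`-derivations, `k ≥ 0`), equipped with the commutator
bracket `[D, D'] = D∘D' − D'∘D`, is a Lie algebra: it is a Lie subalgebra of
`End(g)` with the commutator bracket. -/
theorem der_is_lie_algebra {g : Type*} [AddCommGroup g] [Module ℝ g]
    (L : HomLieAlgebra g)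
    (hmul : ∀ u v, L.α (L.bracket u v) = L.bracket (L.α u) (L.α v)) :
    ∃ S : LieSubalgebra ℝ (Module.End ℝ g),
      S.toSubmodule
        = Submodule.span ℝ {D : Module.End ℝ g | ∃ k : ℕ, IsAlphaDer L k D} :=
  der_is_lie_algebra_general L
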